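/- For every 3×3 real matrix F with det F > 0 and every 3×3 real matrix L, the map t ↦ σ_vol((I + tL)·F) is differentiable at t = 0, and its derivative σ̇ there satisfies σ̇ = L·σ_vol(F) + σ_vol(F)·Lᵀ − tr(L)·σ_vol(F) + D_vol(F) : e, where e = (L + Lᵀ)/2, (D_vol(F) : e)_{ij} = Σ_{k,l} D_vol(F)_{ijkl} e_{kl}, and D_vol(F)_{ijkl} = K(2J − 1)δ_{ij}δ_{kl} − K(J − 1)(δ_{ik}δ_{lj} + δ_{il}δ_{jk}). -/

import Mathlib

/-
Since `σ_vol = K(J − 1)·I` and, by Jacobi's formula, `d/dt det((I + tL)F)` at `t = 0` is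
`J·tr L`, the rate is `K·J·tr(L)·I`. On the other side, `L·σ_vol + σ_vol·Lᵀ = K(J − 1)(L + Lᵀ)`
cancels against the minor-symmetric part of `D_vol : e = K(2J − 1) tr(e)·I − K(J − 1)(e + eᵀ)`,
and the trace terms add up to `K((2J − 1) − (J − 1))·tr L = K·J·tr L`.
-/

open Matrix

/-- Kronecker delta on `Fin 3`. -/
def kdelta (i j : Fin 3) : ℝ := if i = j then 1 else 0

/-- Volumetric part of the neo-Hookean Cauchy stress: `σ_vol(F) = K(J − 1)·I`. -/
noncomputable def nhSigmaVol (K : ℝ) (F : Matrix (Fin 3) (Fin 3) ℝ) :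
    Matrix (Fin 3) (Fin 3) ℝ :=
  (K * (F.det - 1)) • (1 : Matrix (Fin 3) (Fin 3) ℝ)

/-- Volumetric part of the tangent stiffness tensor:
`D_vol(F)_{ijkl} = K(2J − 1)δ_{ij}δ_{kl} − K(J − 1)(δ_{ik}δ_{lj} + δ_{il}δ_{jk})`. -/
noncomputable def nhDVol (K : ℝ) (F : Matrix (Fin 3) (Fin 3) ℝ) (i j k l : Fin 3) : ℝ :=
  K * (2 * F.det - 1) * kdelta i j * kdelta k l
    - K * (F.det - 1) * (kdelta i k * kdelta l j + kdelta i l * kdelta j k)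

attribute [local instance] Matrix.normedAddCommGroup Matrix.normedSpace

open Polynomial in
theorem Matrix.hasDerivAt_det_one_add_smul {𝕜 n : Type*} [NontriviallyNormedField 𝕜] [Fintype n]
    [DecidableEq n] (M : Matrix n n 𝕜) :
    HasDerivAt (fun t : 𝕜 => (1 + t • M).det) M.trace 0 := by
  have hdet : ∀ t : 𝕜, (1 + t • M).det = (det (1 + (X : 𝕜[X]) • M.map C)).eval t := fun t => by
    simp [eval_det, ← smul_eq_mul_diagonal]
  rw [funext hdet, ← derivative_det_one_add_X_smul]
  exact (det (1 + (X : 𝕜[X]) • M.map C)).hasDerivAt 0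

theorem hasDerivAt_nhSigmaVol_one_add_smul_mul (K : ℝ) (F L : Matrix (Fin 3) (Fin 3) ℝ) :
    HasDerivAt (fun t : ℝ => nhSigmaVol K ((1 + t • L) * F))
      ((K * F.det * L.trace) • (1 : Matrix (Fin 3) (Fin 3) ℝ)) 0 := by
  have hJ : HasDerivAt (fun t : ℝ => K * (((1 + t • L) * F).det - 1)) (K * F.det * L.trace) 0 := by
    simp only [det_mul]
    exact ((((hasDerivAt_det_one_add_smul L).mul_const F.det).sub_const 1).const_mul K).congr_deriv
      (by ring)
  exact hJ.smul_const 1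

theorem nhDVol_contract (K : ℝ) (F E : Matrix (Fin 3) (Fin 3) ℝ) :
    (Matrix.of fun i j => ∑ k, ∑ l, nhDVol K F i j k l * E k l)
      = (K * (2 * F.det - 1) * E.trace) • 1 - (K * (F.det - 1)) • (E + Eᵀ) := by
  ext i j
  fin_cases i <;> fin_cases j <;>
    simp [nhDVol, kdelta, Fin.sum_univ_three, trace_fin_three, one_apply] <;> ring

theorem nhSigmaVol_truesdell_rate_general (K : ℝ) (F L : Matrix (Fin 3) (Fin 3) ℝ) :
    HasDerivAt (fun t : ℝ => nhSigmaVol K ((1 + t • L) * F))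
      (L * nhSigmaVol K F + nhSigmaVol K F * Lᵀ - L.trace • nhSigmaVol K F
        + Matrix.of fun i j =>
            ∑ k, ∑ l, nhDVol K F i j k l * (((1 : ℝ)/2) • (L + Lᵀ)) k l) 0 := by
  set E : Matrix (Fin 3) (Fin 3) ℝ := ((1 : ℝ)/2) • (L + Lᵀ)
  have hE_trace : E.trace = L.trace := by
    simp only [E, trace_smul, trace_add, trace_transpose, smul_eq_mul]
    ring
  have hE_sym : E + Eᵀ = L + Lᵀ := by
    simp only [E, transpose_smul, transpose_add, transpose_transpose]; module
  refine (hasDerivAt_nhSigmaVol_one_add_smul_mul K F L).congr_deriv ?_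
  rw [nhDVol_contract, hE_trace, hE_sym]
  simp only [nhSigmaVol, mul_smul_comm, smul_mul_assoc, mul_one, one_mul]
  module

/-- the map `t ↦ σ_vol((I + tL)·F)` is differentiable at `t = 0` and its
derivative there equals `L·σ_vol + σ_vol·Lᵀ − tr(L)·σ_vol + D_vol(F) : e`,
with `e = (L + Lᵀ)/2`. -/
theorem nhSigmaVol_truesdell_rate (K : ℝ) (F L : Matrix (Fin 3) (Fin 3) ℝ)
    (hF : 0 < F.det) :
    HasDerivAt (fun t : ℝ => nhSigmaVol K ((1 + t • L) * F))
      (L * nhSigmaVol K F + nhSigmaVol K F * Lᵀ - L.trace • nhSigmaVol K F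
        + Matrix.of fun i j =>
            ∑ k, ∑ l, nhDVol K F i j k l * (((1 : ℝ)/2) • (L + Lᵀ)) k l) 0 :=
  nhSigmaVol_truesdell_rate_general K F L
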